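/- arXiv:2411.16113 — 8 statements merged into one kernel-verified Lean document; each statement's English description precedes it below -/
import Mathlib

section
/- The number of up-up-or-down-down permutations of the set {-(n+1), ..., n+1} ending with k satisfies the recurrence p_{n+1}(k) = sum over j from -n to n of |j - k| * p_n(j), for all n ≥ 0 and -(n+1) ≤ k ≤ n+1, with initial value p_0(0) = 1. -/
/-- A sequence `a` of length `m` is up-up-or-down-down if
`a (2t) < a (2t+1) ↔ a (2t+1) < a (2t+2)` for all valid `t`
(i.e. `a_{2i-1} < a_{2i} ↔ a_{2i} < a_{2i+1}` in 1-based indexing). -/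
def UUDD {m : ℕ} (a : Fin m → ℤ) : Prop :=
  ∀ t : ℕ, (h : 2 * t + 2 < m) →
    (a ⟨2 * t, by omega⟩ < a ⟨2 * t + 1, by omega⟩ ↔
      a ⟨2 * t + 1, by omega⟩ < a ⟨2 * t + 2, by omega⟩)

/-- `pCount n k` is the number of up-up-or-down-down permutations of
`{-n, …, n}` ending with `k`. -/
noncomputable def pCount (n : ℕ) (k : ℤ) : ℕ :=
  Nat.card {a : Fin (2 * n + 1) → ℤ //
    Function.Injective a ∧ (∀ i, a i ∈ Finset.Icc (-(n : ℤ)) (n : ℤ)) ∧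
      UUDD a ∧ a ⟨2 * n, by omega⟩ = k}

set_option maxHeartbeats 1000000

def phi (x y z : ℤ) : ℤ := z + 1 - (if x < z then 1 else 0) - (if y < z then 1 else 0)

def psi (x y w : ℤ) : ℤ :=
  (w - 1 + (if min x y ≤ w - 1 then 1 else 0)) +
    (if max x y ≤ w - 1 + (if min x y ≤ w - 1 then 1 else 0) then 1 else 0)

theorem psi_spec (x y w : ℤ) :
    psi x y w ≠ x ∧ psi x y w ≠ y ∧ phi x y (psi x y w) = w := by
  unfold psi phi; split_ifs <;> omega

theorem psi_phi {x y z : ℤ} (hxy : x ≠ y) (hx : z ≠ x) (hy : z ≠ y) :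
    psi x y (phi x y z) = z := by
  unfold psi phi; split_ifs <;> omega

theorem psi_lt_iff (x y : ℤ) {w w' : ℤ} : psi x y w < psi x y w' ↔ w < w' := by
  unfold psi; split_ifs <;> omega

theorem phi_lt_iff {x y z z' : ℤ} (hxy : x ≠ y) (h1 : z ≠ x) (h2 : z ≠ y)
    (h3 : z' ≠ x) (h4 : z' ≠ y) : phi x y z < phi x y z' ↔ z < z' := by
  unfold phi; split_ifs <;> omega

theorem phi_bounds {N x y z : ℤ} (hx : -(N+1) ≤ x ∧ x ≤ N+1) (hy : -(N+1) ≤ y ∧ y ≤ N+1)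
    (hxy : x ≠ y) (hz : -(N+1) ≤ z ∧ z ≤ N+1) (h1 : z ≠ x) (h2 : z ≠ y) :
    -N ≤ phi x y z ∧ phi x y z ≤ N := by
  unfold phi; split_ifs <;> omega

theorem psi_bounds {N : ℤ} (x y : ℤ) {w : ℤ} (hw : -N ≤ w ∧ w ≤ N) :
    -(N+1) ≤ psi x y w ∧ psi x y w ≤ N+1 := by
  unfold psi; split_ifs <;> omega

def Cond (j k m : ℤ) : Prop := (j - 1 < m ∧ m < k) ∨ (k < m ∧ m < j + 1)

theorem cond_of_between {k m L : ℤ} (hb : (L < m ∧ m < k) ∨ (k < m ∧ m < L)) :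
    Cond (phi k m L) k m := by
  unfold Cond phi; split_ifs <;> omega

theorem psi_cond {j k m : ℤ} (h : Cond j k m) : (psi k m j < m ↔ m < k) := by
  unfold Cond at h; unfold psi; split_ifs <;> omega

-- helpers
theorem apply_eq {m : ℕ} (a : Fin m → ℤ) {v v' : ℕ} (hv : v < m) (hv' : v' < m)
    (h : v = v') : a ⟨v, hv⟩ = a ⟨v', hv'⟩ :=
  congrArg a (Fin.ext h)

theorem ne_apply {m : ℕ} {a : Fin m → ℤ} (hinj : Function.Injective a)
    {v v' : ℕ} (hv : v < m) (hv' : v' < m) (h : v ≠ v') :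
    a ⟨v, hv⟩ ≠ a ⟨v', hv'⟩ :=
  fun he => h (congrArg Fin.val (hinj he))

def PP (n : ℕ) (k : ℤ) (a : Fin (2 * n + 1) → ℤ) : Prop :=
  Function.Injective a ∧ (∀ i, a i ∈ Finset.Icc (-(n : ℤ)) (n : ℤ)) ∧
    UUDD a ∧ a ⟨2 * n, by omega⟩ = k

def chop (n : ℕ) (k m : ℤ) (a : Fin (2 * (n+1) + 1) → ℤ) : Fin (2 * n + 1) → ℤ :=
  fun i => phi k m (a ⟨i.1, by omega⟩)

def glue (n : ℕ) (k m : ℤ) (b : Fin (2 * n + 1) → ℤ) : Fin (2 * (n+1) + 1) → ℤ :=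
  fun i => if h : i.1 < 2 * n + 1 then psi k m (b ⟨i.1, h⟩)
    else if i.1 = 2 * n + 1 then m else k

theorem glue_lt {n : ℕ} {k m : ℤ} {b : Fin (2*n+1) → ℤ} {v : ℕ} (hv : v < 2*n+1)
    (hw : v < 2*(n+1)+1) : glue n k m b ⟨v, hw⟩ = psi k m (b ⟨v, hv⟩) := by
  simp only [glue]; rw [dif_pos hv]

theorem glue_mid {n : ℕ} {k m : ℤ} {b : Fin (2*n+1) → ℤ} {v : ℕ} (hv : v = 2*n+1)
    (hw : v < 2*(n+1)+1) : glue n k m b ⟨v, hw⟩ = m := by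
  simp only [glue]; rw [dif_neg (by omega), if_pos hv]

theorem glue_top {n : ℕ} {k m : ℤ} {b : Fin (2*n+1) → ℤ} {v : ℕ} (hv : v = 2*n+2)
    (hw : v < 2*(n+1)+1) : glue n k m b ⟨v, hw⟩ = k := by
  simp only [glue]; rw [dif_neg (by omega), if_neg (by omega)]

theorem fin_eta {m : ℕ} (a : Fin m → ℤ) (i : Fin m) : a i = a ⟨i.1, i.2⟩ := rfl


theorem lift_lt {n v : ℕ} (h : v < 2*n+1) : v < 2*(n+1)+1 := by omega
theorem idx0 (n : ℕ) : 2*n < 2*(n+1)+1 := by omega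
theorem idx1 (n : ℕ) : 2*n+1 < 2*(n+1)+1 := by omega
theorem idx2 (n : ℕ) : 2*n+2 < 2*(n+1)+1 := by omega
theorem idxt0 {n t : ℕ} (h : 2*t+2 < 2*n+1) : 2*t < 2*n+1 := by omega
theorem idxt1 {n t : ℕ} (h : 2*t+2 < 2*n+1) : 2*t+1 < 2*n+1 := by omega

theorem forward (n : ℕ) (k j : ℤ) (hk1 : -((n:ℤ)+1) ≤ k) (hk2 : k ≤ (n:ℤ)+1)
    (a : Fin (2 * (n+1) + 1) → ℤ) (ha : PP (n+1) k a)
    (hfib : phi k (a ⟨2*n+1, idx1 n⟩) (a ⟨2*n, idx0 n⟩) = j) :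
    Cond j k (a ⟨2*n+1, idx1 n⟩) ∧ PP n j (chop n k (a ⟨2*n+1, idx1 n⟩) a) := by
  obtain ⟨hinj, hmem, huudd, hlast⟩ := ha
  have hlast' : a ⟨2*n+2, idx2 n⟩ = k := by
    exact (apply_eq a (idx2 n) (by omega) (by omega)).trans hlast
  have hmk : a ⟨2*n+1, idx1 n⟩ ≠ k := by
    rw [← hlast']; exact ne_apply hinj (idx1 n) (idx2 n) (by omega)
  have hIcc : ∀ i : Fin (2*(n+1)+1), -((n:ℤ)+1) ≤ a i ∧ a i ≤ (n:ℤ)+1 := by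
    intro i
    have := hmem i
    rw [Finset.mem_Icc] at this
    push_cast at this
    exact this
  have hneq : ∀ (v : ℕ) (hv : v < 2*n+1),
      a ⟨v, lift_lt hv⟩ ≠ k ∧ a ⟨v, lift_lt hv⟩ ≠ a ⟨2*n+1, idx1 n⟩ := by
    intro v hv
    constructor
    · rw [← hlast']; exact ne_apply hinj (lift_lt hv) (idx2 n) (by omega)
    · exact ne_apply hinj (lift_lt hv) (idx1 n) (by omega)
  have hb : (a ⟨2*n, idx0 n⟩ < a ⟨2*n+1, idx1 n⟩ ∧ a ⟨2*n+1, idx1 n⟩ < k) ∨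
      (k < a ⟨2*n+1, idx1 n⟩ ∧ a ⟨2*n+1, idx1 n⟩ < a ⟨2*n, idx0 n⟩) := by
    have h1 := huudd n (by omega)
    rw [hlast'] at h1
    have h2 := (hneq (2*n) (by omega)).1
    have h3 := (hneq (2*n) (by omega)).2
    clear hfib
    omega
  have hcond : Cond j k (a ⟨2*n+1, idx1 n⟩) := by rw [← hfib]; exact cond_of_between hb
  refine ⟨hcond, ?_, ?_, ?_, ?_⟩
  · -- injective
    intro i i' h
    simp only [chop] at h
    have e1 := hneq i.1 i.2
    have e2 := hneq i'.1 i'.2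
    have : a ⟨i.1, lift_lt i.2⟩ = a ⟨i'.1, lift_lt i'.2⟩ := by
      rw [← psi_phi (Ne.symm hmk) e1.1 e1.2, h, psi_phi (Ne.symm hmk) e2.1 e2.2]
    exact Fin.ext (congrArg Fin.val (hinj this) : _)
  · -- membership
    intro i
    simp only [chop, Finset.mem_Icc]
    have e1 := hneq i.1 i.2
    have := phi_bounds (N := (n:ℤ)) ⟨hk1, hk2⟩ (hIcc ⟨2*n+1, idx1 n⟩) hmk.symm
      (hIcc ⟨i.1, lift_lt i.2⟩) e1.1 e1.2
    exact ⟨this.1, this.2⟩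
  · -- UUDD
    intro t ht
    simp only [chop]
    have e1 := hneq (2*t) (idxt0 ht)
    have e2 := hneq (2*t+1) (idxt1 ht)
    have e3 := hneq (2*t+2) ht
    rw [phi_lt_iff hmk.symm e1.1 e1.2 e2.1 e2.2, phi_lt_iff hmk.symm e2.1 e2.2 e3.1 e3.2]
    exact huudd t (by omega)
  · -- last
    simp only [chop]
    exact hfib

theorem backward (n : ℕ) (k j : ℤ) (hk1 : -((n:ℤ)+1) ≤ k) (hk2 : k ≤ (n:ℤ)+1)
    (m : ℤ) (hm : Cond j k m)
    (b : Fin (2 * n + 1) → ℤ) (hb : PP n j b) :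
    PP (n+1) k (glue n k m b) ∧
      phi k ((glue n k m b) ⟨2*n+1, idx1 n⟩) ((glue n k m b) ⟨2*n, idx0 n⟩) = j := by
  obtain ⟨hinj, hmem, huudd, hlast⟩ := hb
  have hmk : k ≠ m := by unfold Cond at hm; omega
  have hIcc : ∀ i : Fin (2*n+1), -(n:ℤ) ≤ b i ∧ b i ≤ (n:ℤ) := by
    intro i; have := hmem i; rw [Finset.mem_Icc] at this; exact this
  have glast : (glue n k m b) ⟨2*n, idx0 n⟩ = psi k m j := by
    rw [glue_lt (by omega)]
    rw [show b ⟨2*n, by omega⟩ = j from hlast]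
  have hmbd : -((n:ℤ)+1) ≤ m ∧ m ≤ (n:ℤ)+1 := by
    unfold Cond at hm
    have := hIcc ⟨2*n, by omega⟩
    rw [hlast] at this
    omega
  refine ⟨⟨?_, ?_, ?_, ?_⟩, ?_⟩
  · -- injective
    rintro ⟨v, hv⟩ ⟨v', hv'⟩ h
    apply Fin.ext
    show v = v'
    rcases Nat.lt_or_ge v (2*n+1) with hi | hi <;>
      rcases Nat.lt_or_ge v' (2*n+1) with hi' | hi'
    · rw [glue_lt hi, glue_lt hi'] at h
      have : b ⟨v, hi⟩ = b ⟨v', hi'⟩ := by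
        rw [← (psi_spec k m (b ⟨v, hi⟩)).2.2, h, (psi_spec k m (b ⟨v', hi'⟩)).2.2]
      exact congrArg Fin.val (hinj this)
    · exfalso
      rw [glue_lt hi] at h
      rcases Nat.eq_or_lt_of_le hi' with he | hlt
      · rw [glue_mid he.symm] at h
        exact (psi_spec k m (b ⟨v, hi⟩)).2.1 h
      · rw [glue_top (by omega)] at h
        exact (psi_spec k m (b ⟨v, hi⟩)).1 h
    · exfalso
      rw [glue_lt hi'] at h
      rcases Nat.eq_or_lt_of_le hi with he | hlt
      · rw [glue_mid he.symm] at h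
        exact (psi_spec k m (b ⟨v', hi'⟩)).2.1 h.symm
      · rw [glue_top (by omega)] at h
        exact (psi_spec k m (b ⟨v', hi'⟩)).1 h.symm
    · rcases Nat.eq_or_lt_of_le hi with he | hlt <;>
        rcases Nat.eq_or_lt_of_le hi' with he' | hlt'
      · omega
      · exfalso
        rw [glue_mid he.symm, glue_top (by omega)] at h
        exact hmk h.symm
      · exfalso
        rw [glue_top (by omega), glue_mid he'.symm] at h
        exact hmk h
      · omega
  · -- membership
    rintro ⟨v, hv⟩
    rw [Finset.mem_Icc]
    push_cast
    rcases Nat.lt_or_ge v (2*n+1) with hi | hi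
    · rw [glue_lt hi]
      exact psi_bounds k m (hIcc ⟨v, hi⟩)
    · rcases Nat.eq_or_lt_of_le hi with he | hlt
      · rw [glue_mid he.symm]; exact hmbd
      · rw [glue_top (by omega)]; exact ⟨hk1, hk2⟩
  · -- UUDD
    intro t ht
    rcases Nat.lt_or_ge t n with htn | htn
    · rw [glue_lt (show 2*t < 2*n+1 by omega), glue_lt (show 2*t+1 < 2*n+1 by omega),
        glue_lt (show 2*t+2 < 2*n+1 by omega), psi_lt_iff, psi_lt_iff]
      exact huudd t (by omega)
    · have htn' : t = n := by omega
      subst htn'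
      rw [glue_mid rfl, glue_top rfl, glast]
      exact psi_cond hm
  · -- last = k
    rw [apply_eq (glue n k m b) (by omega) (idx2 n) (by omega), glue_top rfl]
  · -- fiber
    rw [glue_mid rfl, glast, (psi_spec k m j).2.2]

theorem pp_last' {n : ℕ} {k : ℤ} {a : Fin (2*(n+1)+1) → ℤ} (ha : PP (n+1) k a) :
    a ⟨2*n+2, idx2 n⟩ = k :=
  (apply_eq a (idx2 n) (by omega) (by omega)).trans ha.2.2.2

theorem pp_mk {n : ℕ} {k : ℤ} {a : Fin (2*(n+1)+1) → ℤ} (ha : PP (n+1) k a) :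
    a ⟨2*n+1, idx1 n⟩ ≠ k := by
  rw [← pp_last' ha]; exact ne_apply ha.1 (idx1 n) (idx2 n) (by omega)

theorem pp_ne {n : ℕ} {k : ℤ} {a : Fin (2*(n+1)+1) → ℤ} (ha : PP (n+1) k a)
    {v : ℕ} (hv : v < 2*n+1) :
    a ⟨v, lift_lt hv⟩ ≠ k ∧ a ⟨v, lift_lt hv⟩ ≠ a ⟨2*n+1, idx1 n⟩ := by
  constructor
  · rw [← pp_last' ha]; exact ne_apply ha.1 (lift_lt hv) (idx2 n) (by omega)
  · exact ne_apply ha.1 (lift_lt hv) (idx1 n) (by omega)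

theorem fiber_card (n : ℕ) (k j : ℤ) (hk1 : -((n:ℤ)+1) ≤ k) (hk2 : k ≤ (n:ℤ)+1) :
    Nat.card {a : Fin (2*(n+1)+1) → ℤ //
        PP (n+1) k a ∧ phi k (a ⟨2*n+1, idx1 n⟩) (a ⟨2*n, idx0 n⟩) = j}
      = (j - k).natAbs * Nat.card {b : Fin (2*n+1) → ℤ // PP n j b} := by
  have e : {a : Fin (2*(n+1)+1) → ℤ //
        PP (n+1) k a ∧ phi k (a ⟨2*n+1, idx1 n⟩) (a ⟨2*n, idx0 n⟩) = j}
      ≃ {m : ℤ // Cond j k m} × {b : Fin (2*n+1) → ℤ // PP n j b} :=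
    { toFun := fun p =>
        ⟨⟨p.1 ⟨2*n+1, idx1 n⟩, (forward n k j hk1 hk2 p.1 p.2.1 p.2.2).1⟩,
         ⟨chop n k (p.1 ⟨2*n+1, idx1 n⟩) p.1, (forward n k j hk1 hk2 p.1 p.2.1 p.2.2).2⟩⟩
      invFun := fun q =>
        ⟨glue n k q.1.1 q.2.1, backward n k j hk1 hk2 q.1.1 q.1.2 q.2.1 q.2.2⟩
      left_inv := by
        intro p
        apply Subtype.ext
        funext i
        obtain ⟨v, hv⟩ := i
        show glue n k (p.1 ⟨2*n+1, idx1 n⟩) (chop n k (p.1 ⟨2*n+1, idx1 n⟩) p.1) ⟨v, hv⟩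
          = p.1 ⟨v, hv⟩
        rcases Nat.lt_or_ge v (2*n+1) with hi | hi
        · rw [glue_lt hi]
          show psi k _ (phi k _ (p.1 ⟨v, _⟩)) = _
          have e1 := pp_ne p.2.1 hi
          rw [psi_phi (Ne.symm (pp_mk p.2.1)) e1.1 e1.2]
        · rcases Nat.eq_or_lt_of_le hi with he | hlt
          · rw [glue_mid he.symm]
            exact apply_eq p.1 (idx1 n) hv he
          · rw [glue_top (by omega)]
            exact (pp_last' p.2.1).symm.trans (apply_eq p.1 (idx2 n) hv (by omega))
      right_inv := by
        intro q
        obtain ⟨⟨m, hmq⟩, ⟨b, hbq⟩⟩ := q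
        refine Prod.ext ?_ ?_ <;> apply Subtype.ext
        · show glue n k m b ⟨2*n+1, idx1 n⟩ = m
          exact glue_mid rfl (idx1 n)
        · funext i
          obtain ⟨v, hv⟩ := i
          show phi k (glue n k m b ⟨2*n+1, idx1 n⟩) (glue n k m b ⟨v, _⟩) = b ⟨v, hv⟩
          rw [glue_mid rfl, glue_lt hv]
          exact (psi_spec k m (b ⟨v, hv⟩)).2.2 }
  rw [Nat.card_congr e, Nat.card_prod]
  congr 1
  have hset : {m : ℤ | Cond j k m}
      = ↑(Finset.Ioo (j-1) k ∪ Finset.Ioo k (j+1)) := by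
    ext x
    simp only [Set.mem_setOf_eq, Finset.coe_union, Set.mem_union, Finset.coe_Ioo,
      Set.mem_Ioo, Cond]
  calc Nat.card {m : ℤ // Cond j k m} = ({m : ℤ | Cond j k m}).ncard :=
        Nat.card_coe_set_eq _
    _ = ((Finset.Ioo (j-1) k ∪ Finset.Ioo k (j+1) : Finset ℤ) : Set ℤ).ncard := by
        rw [hset]
    _ = (Finset.Ioo (j-1) k ∪ Finset.Ioo k (j+1)).card := Set.ncard_coe_finset _
    _ = (Finset.Ioo (j-1) k).card + (Finset.Ioo k (j+1)).card := by
        apply Finset.card_union_of_disjoint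
        rw [Finset.disjoint_left]
        intro x hx hx'
        rw [Finset.mem_Ioo] at hx hx'
        omega
    _ = (j - k).natAbs := by
        rw [Int.card_Ioo, Int.card_Ioo]
        omega

theorem pp_finite (n : ℕ) (k : ℤ) : {a : Fin (2*n+1) → ℤ | PP n k a}.Finite := by
  apply Set.Finite.subset
    (Set.Finite.pi (t := fun _ : Fin (2*n+1) => ((Finset.Icc (-(n:ℤ)) (n:ℤ) : Finset ℤ) : Set ℤ))
      (fun _ => Finset.finite_toSet _))
  intro a ha
  rw [Set.mem_pi]
  intro i _
  exact ha.2.1 i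

noncomputable def pCount' (n : ℕ) (k : ℤ) : ℕ := Nat.card {a : Fin (2*n+1) → ℤ // PP n k a}

theorem main_card (n : ℕ) (k : ℤ) (hk1 : -((n:ℤ)+1) ≤ k) (hk2 : k ≤ (n:ℤ)+1) :
    pCount' (n+1) k
      = ∑ j ∈ Finset.Icc (-(n:ℤ)) (n:ℤ), (j - k).natAbs * pCount' n j := by
  classical
  have hfin := pp_finite (n+1) k
  have hmap : ∀ a ∈ hfin.toFinset,
      phi k (a ⟨2*n+1, idx1 n⟩) (a ⟨2*n, idx0 n⟩) ∈ Finset.Icc (-(n:ℤ)) (n:ℤ) := by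
    intro a ha
    rw [Set.Finite.mem_toFinset] at ha
    rw [Finset.mem_Icc]
    have hIcc : ∀ i : Fin (2*(n+1)+1), -((n:ℤ)+1) ≤ a i ∧ a i ≤ (n:ℤ)+1 := by
      intro i
      have := ha.2.1 i
      rw [Finset.mem_Icc] at this
      push_cast at this
      exact this
    have e1 := pp_ne ha (show 2*n < 2*n+1 by omega)
    exact phi_bounds (N := (n:ℤ)) ⟨hk1, hk2⟩ (hIcc ⟨2*n+1, idx1 n⟩) (pp_mk ha).symm
      (hIcc ⟨2*n, lift_lt (by omega)⟩) e1.1 e1.2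
  have h0 : pCount' (n+1) k = hfin.toFinset.card := by
    rw [pCount']
    rw [show {a : Fin (2*(n+1)+1) → ℤ // PP (n+1) k a}
      = ↥{a : Fin (2*(n+1)+1) → ℤ | PP (n+1) k a} from rfl]
    rw [Nat.card_coe_set_eq, Set.ncard_eq_toFinset_card _ hfin]
  rw [h0, Finset.card_eq_sum_card_fiberwise hmap]
  apply Finset.sum_congr rfl
  intro j hj
  have hfin2 : {a : Fin (2*(n+1)+1) → ℤ |
      PP (n+1) k a ∧ phi k (a ⟨2*n+1, idx1 n⟩) (a ⟨2*n, idx0 n⟩) = j}.Finite :=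
    hfin.subset (fun a ha => ha.1)
  have hfilter : hfin.toFinset.filter
      (fun a => phi k (a ⟨2*n+1, idx1 n⟩) (a ⟨2*n, idx0 n⟩) = j) = hfin2.toFinset := by
    ext a
    rw [Finset.mem_filter, Set.Finite.mem_toFinset, Set.Finite.mem_toFinset]
    exact Iff.rfl
  rw [hfilter, ← Set.ncard_eq_toFinset_card _ hfin2, ← Nat.card_coe_set_eq]
  exact fiber_card n k j hk1 hk2

theorem base_case : pCount' 0 0 = 1 := by
  rw [pCount']
  rw [Nat.card_eq_one_iff_unique]
  constructor
  · constructor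
    intro p q
    apply Subtype.ext
    funext i
    have hi : i = ⟨2*0, by omega⟩ := Fin.ext (by omega)
    rw [hi, p.2.2.2.2, q.2.2.2.2]
  · refine ⟨⟨fun _ => 0, fun x y _ => Fin.ext (by omega), ?_, ?_, rfl⟩⟩
    · intro i
      rw [Finset.mem_Icc]
      norm_num
    · intro t ht
      exact absurd ht (by omega)

theorem final : pCount' 0 0 = 1 ∧
    ∀ n : ℕ, ∀ k : ℤ, -((n : ℤ) + 1) ≤ k → k ≤ (n : ℤ) + 1 →
      (pCount' (n + 1) k : ℤ) =
        ∑ j ∈ Finset.Icc (-(n : ℤ)) (n : ℤ), |j - k| * (pCount' n j : ℤ) := by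
  refine ⟨base_case, ?_⟩
  intro n k hk1 hk2
  rw [main_card n k hk1 hk2]
  push_cast
  apply Finset.sum_congr rfl
  intro j hj
  rfl

/-- `pCount 0 0 = 1` and `pCount (n+1) k = ∑_{j=-n}^{n} |j - k| * pCount n j`
for `-(n+1) ≤ k ≤ n+1`. -/
theorem pCount_recurrence :
    pCount 0 0 = 1 ∧
      ∀ n : ℕ, ∀ k : ℤ, -((n : ℤ) + 1) ≤ k → k ≤ (n : ℤ) + 1 →
        (pCount (n + 1) k : ℤ) =
          ∑ j ∈ Finset.Icc (-(n : ℤ)) (n : ℤ), |j - k| * (pCount n j : ℤ) := by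
  obtain ⟨h1, h2⟩ := final
  refine ⟨h1, ?_⟩
  intro n k hk1 hk2
  exact h2 n k hk1 hk2
end

section
/- For all n ≥ 0 and -n ≤ k ≤ n, the second difference identity p_{n+1}(k+1) - 2 p_{n+1}(k) + p_{n+1}(k-1) = 2 p_n(k) holds. -/
noncomputable def p : ℕ → ℤ → ℤ
  | 0, k => if k = 0 then 1 else 0
  | n + 1, k => ∑ j ∈ Finset.Icc (-(n : ℤ)) (n : ℤ), |j - k| * p n j

/- The kernel `k ↦ |j - k|` is piecewise linear with a single kink at `k = j`, so its second
difference is `2` at `j` and `0` elsewhere; `p (n + 1)` is a superposition of such kernels weighted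
by `p n`, hence its second difference recovers `2 p n`. -/

theorem abs_sub_second_difference (j k : ℤ) :
    |j - (k + 1)| - 2 * |j - k| + |j - (k - 1)| = if j = k then 2 else 0 := by
  rcases lt_trichotomy j k with hlt | rfl | hgt
  · rw [if_neg hlt.ne, abs_of_neg (by omega), abs_of_neg (by omega), abs_of_nonpos (by omega)]
    ring
  · simp
  · rw [if_neg hgt.ne', abs_of_nonneg (by omega), abs_of_pos (by omega), abs_of_pos (by omega)]
    ring

theorem sum_abs_sub_mul_second_difference {s : Finset ℤ} {k : ℤ} (hk : k ∈ s) (w : ℤ → ℤ) :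
    ∑ j ∈ s, |j - (k + 1)| * w j - 2 * ∑ j ∈ s, |j - k| * w j + ∑ j ∈ s, |j - (k - 1)| * w j =
      2 * w k := by
  calc _ = ∑ j ∈ s, (|j - (k + 1)| - 2 * |j - k| + |j - (k - 1)|) * w j := by
          simp only [Finset.mul_sum, ← Finset.sum_sub_distrib, ← Finset.sum_add_distrib]
          exact Finset.sum_congr rfl fun j _ => by ring
    _ = ∑ j ∈ s, if j = k then 2 * w j else 0 := by
          refine Finset.sum_congr rfl fun j _ => ?_
          rw [abs_sub_second_difference]
          split_ifs <;> ring
    _ = 2 * w k := by rw [Finset.sum_ite_eq', if_pos hk]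

/-- Second difference identity: for `-n ≤ k ≤ n`,
`p (n+1) (k+1) - 2 p (n+1) k + p (n+1) (k-1) = 2 p n k`. -/
theorem p_second_difference (n : ℕ) (k : ℤ) (h1 : -(n : ℤ) ≤ k) (h2 : k ≤ (n : ℤ)) :
    p (n + 1) (k + 1) - 2 * p (n + 1) k + p (n + 1) (k - 1) = 2 * p n k :=
  sum_abs_sub_mul_second_difference (Finset.mem_Icc.mpr ⟨h1, h2⟩) (p n)
end

section
/- For all n ≥ 1, (n-1) p_n(n) = n p_n(n-1). -/
open Finset

lemma Finset.sum_Icc_neg_comp {M : Type*} [AddCommMonoid M] (m : ℤ) (f : ℤ → M) :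
    ∑ j ∈ Icc (-m) m, f (-j) = ∑ j ∈ Icc (-m) m, f j :=
  sum_nbij' (fun j => -j) (fun j => -j) (fun j => by simp only [mem_Icc]; omega)
    (fun j => by simp only [mem_Icc]; omega) (by simp) (by simp) (by simp)

lemma Finset.sum_Icc_mul_eq_zero_of_even (m : ℤ) {f : ℤ → ℤ} (hf : ∀ j, f (-j) = f j) :
    ∑ j ∈ Icc (-m) m, j * f j = 0 := by
  have h := sum_Icc_neg_comp m (fun j => j * f j)
  simp only [hf, neg_mul, sum_neg_distrib] at h
  linarith

lemma p_succ (n : ℕ) (k : ℤ) :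
    p (n + 1) k = ∑ j ∈ Icc (-(n : ℤ)) n, |j - k| * p n j := by
  rw [p]

lemma p_neg (n : ℕ) (k : ℤ) : p n (-k) = p n k := by
  induction n generalizing k with
  | zero => simp [p]
  | succ n ih =>
    rw [p_succ, p_succ, ← sum_Icc_neg_comp]
    refine sum_congr rfl fun j _ => ?_
    rw [ih, ← abs_neg]
    ring_nf

lemma p_succ_of_le {n : ℕ} {k : ℤ} (hk : (n : ℤ) ≤ k) :
    p (n + 1) k = k * ∑ j ∈ Icc (-(n : ℤ)) n, p n j := by
  have hterm : ∀ j ∈ Icc (-(n : ℤ)) n, |j - k| * p n j = k * p n j - j * p n j := by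
    intro j hj
    rw [abs_of_nonpos (by grind)]
    ring
  rw [p_succ, sum_congr rfl hterm, sum_sub_distrib, sum_Icc_mul_eq_zero_of_even _ (p_neg n),
    sub_zero, mul_sum]

/-- For all `n ≥ 1`, `(n-1) p n n = n p n (n-1)`. -/
theorem p_edge (n : ℕ) (hn : 1 ≤ n) :
    ((n : ℤ) - 1) * p n (n : ℤ) = (n : ℤ) * p n ((n : ℤ) - 1) := by
  obtain ⟨m, rfl⟩ : ∃ m, n = m + 1 := ⟨n - 1, by omega⟩
  push_cast
  rw [p_succ_of_le (by omega), add_sub_cancel_right, p_succ_of_le le_rfl]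
  ring
end

section
/- Let (a_{i,j}) for i, j ≥ 0 be a doubly indexed family of real numbers satisfying a_{i+1,j} - a_{i,j+1} = 2 a_{i,j} for all i, j ≥ 0. Then the bivariate exponential generating function R(x,y) = sum_{i,j} a_{i,j} x^i y^j / (i! j!) equals e^{-2y} A(x+y), where A(x) = sum_i a_{i,0} x^i / i!. Equivalently, for all i, j: a_{i,j} = sum_{m=0}^{j} binom(j, m) (-2)^{j-m} a_{i+m, 0}. -/
/-- If `a (i+1) j - a i (j+1) = 2 * a i j` for all `i, j`, then the bivariate EGF
`R(x,y) = ∑ a_{i,j} x^i y^j/(i!j!)` equals `e^{-2y} A(x+y)` where `A` is the EGF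
of the first row; coefficient-wise,
`a i j = ∑_{m=0}^{j} C(j,m) (-2)^{j-m} a (i+m) 0`. -/
theorem seidel_row_expansion (a : ℕ → ℕ → ℝ)
    (hrec : ∀ i j, a (i + 1) j - a i (j + 1) = 2 * a i j) :
    ∀ i j, a i j =
      ∑ m ∈ Finset.range (j + 1), (j.choose m : ℝ) * (-2 : ℝ) ^ (j - m) * a (i + m) 0 := by
  intro i j
  induction j generalizing i with
  | zero => simp
  | succ j ih =>
    have key : a i (j + 1) = a (i + 1) j - 2 * a i j := by
      have := hrec i j; linarith
    rw [key, ih (i + 1), ih i]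
    symm
    -- Prove the sum identity
    rw [Finset.sum_range_succ']
    have hsplit : ∀ m ∈ Finset.range (j + 1),
        ((j + 1).choose (m + 1) : ℝ) * (-2 : ℝ) ^ (j + 1 - (m + 1)) * a (i + (m + 1)) 0
        = (j.choose m : ℝ) * (-2 : ℝ) ^ (j - m) * a (i + 1 + m) 0
          + (j.choose (m + 1) : ℝ) * (-2 : ℝ) ^ (j - m) * a (i + (m + 1)) 0 := by
      intro m hm
      have hch : ((j + 1).choose (m + 1) : ℝ) = (j.choose m : ℝ) + (j.choose (m + 1) : ℝ) := by
        rw [Nat.choose_succ_succ]; push_cast; ring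
      have hsub : j + 1 - (m + 1) = j - m := by omega
      have hadd : i + 1 + m = i + (m + 1) := by ring
      rw [hch, hsub, hadd]; ring
    rw [Finset.sum_congr rfl hsplit, Finset.sum_add_distrib]
    -- second LHS sum: top term vanishes
    rw [show (∑ m ∈ Finset.range (j + 1), (j.choose (m + 1) : ℝ) * (-2 : ℝ) ^ (j - m) * a (i + (m + 1)) 0)
        = (∑ m ∈ Finset.range j, (j.choose (m + 1) : ℝ) * (-2 : ℝ) ^ (j - m) * a (i + (m + 1)) 0)
          + (j.choose (j + 1) : ℝ) * (-2 : ℝ) ^ (j - j) * a (i + (j + 1)) 0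
      from Finset.sum_range_succ _ j]
    have htop : (j.choose (j + 1) : ℝ) * (-2 : ℝ) ^ (j - j) * a (i + (j + 1)) 0 = 0 := by
      simp [Nat.choose_succ_self]
    rw [htop, add_zero]
    -- Now handle the RHS: -2 * sum
    rw [show (∑ m ∈ Finset.range (j + 1), (j.choose m : ℝ) * (-2 : ℝ) ^ (j - m) * a (i + m) 0)
        = (∑ m ∈ Finset.range j, (j.choose (m + 1) : ℝ) * (-2 : ℝ) ^ (j - (m + 1)) * a (i + (m + 1)) 0)
          + (j.choose 0 : ℝ) * (-2 : ℝ) ^ (j - 0) * a (i + 0) 0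
      from Finset.sum_range_succ' _ j]
    have hneg : ∀ m ∈ Finset.range j,
        (j.choose (m + 1) : ℝ) * (-2 : ℝ) ^ (j - m) * a (i + (m + 1)) 0
        = -2 * ((j.choose (m + 1) : ℝ) * (-2 : ℝ) ^ (j - (m + 1)) * a (i + (m + 1)) 0) := by
      intro m hm
      rw [Finset.mem_range] at hm
      have : j - m = (j - (m + 1)) + 1 := by omega
      rw [this]; ring
    rw [Finset.sum_congr rfl hneg, ← Finset.mul_sum]
    simp only [Nat.choose_zero_right, Nat.cast_one, Nat.sub_zero, add_zero, Nat.add_sub_cancel,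
      Nat.choose_self]
    ring
end

section
/- Let (a_{i,j}) satisfy a_{i+1,j} - a_{i,j+1} = 2 a_{i,j} for all i, j ≥ 0, and additionally a_{j,i} = (-1)^{i+j} a_{i,j} for all i, j. Then the power series B(x) = e^{-x} A(x), where A(x) = sum_i a_{i,0} x^i / i!, is even: B(x) = B(-x), i.e., the odd-degree coefficients of e^{-x} A(x) vanish. -/
lemma coeff_aux (i k : ℕ) (hk : k ≤ i) :
    ∑ m ∈ Finset.range (i + 1), (i.choose m : ℝ) * (m.choose k : ℝ) * (-2 : ℝ) ^ (m - k)
      = (-1 : ℝ) ^ (i - k) * (i.choose k : ℝ) := by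
  have h1 : ∑ m ∈ Finset.range (i + 1), (i.choose m : ℝ) * (m.choose k : ℝ) * (-2 : ℝ) ^ (m - k)
      = ∑ m ∈ Finset.Ico k (i + 1), (i.choose m : ℝ) * (m.choose k : ℝ) * (-2 : ℝ) ^ (m - k) := by
    rw [Finset.range_eq_Ico, ← Finset.sum_Ico_consecutive _ (Nat.zero_le k) (by omega)]
    have : ∑ m ∈ Finset.Ico 0 k, (i.choose m : ℝ) * (m.choose k : ℝ) * (-2 : ℝ) ^ (m - k) = 0 := by
      apply Finset.sum_eq_zero
      intro m hm
      simp only [Finset.mem_Ico] at hm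
      rw [Nat.choose_eq_zero_of_lt hm.2]
      simp
    rw [this, zero_add]
  rw [h1, Finset.sum_Ico_eq_sum_range]
  have h2 : ∀ t ∈ Finset.range (i + 1 - k),
      (i.choose (k + t) : ℝ) * ((k + t).choose k : ℝ) * (-2 : ℝ) ^ (k + t - k)
      = (i.choose k : ℝ) * ((i - k).choose t : ℝ) * (-2 : ℝ) ^ t := by
    intro t ht
    simp only [Finset.mem_range] at ht
    have hle : k + t ≤ i := by omega
    have hm := Nat.choose_mul (n := i) (Nat.le_add_right k t)
    rw [Nat.add_sub_cancel_left] at hm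
    have h3 : (i.choose (k + t) : ℝ) * ((k + t).choose k : ℝ)
        = (i.choose k : ℝ) * ((i - k).choose t : ℝ) := by
      rw [← Nat.cast_mul, ← Nat.cast_mul, hm]
    rw [Nat.add_sub_cancel_left, h3]
  rw [Finset.sum_congr rfl h2]
  have hn : i + 1 - k = (i - k) + 1 := by omega
  rw [hn]
  have := add_pow (-2 : ℝ) 1 (i - k)
  simp only [one_pow, mul_one] at this
  have hval : ((-2 : ℝ) + 1) ^ (i - k) = (-1 : ℝ) ^ (i - k) := by norm_num
  rw [hval] at this
  calc ∑ t ∈ Finset.range (i - k + 1), (i.choose k : ℝ) * ((i - k).choose t : ℝ) * (-2:ℝ) ^ t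
      = (i.choose k : ℝ) * ∑ t ∈ Finset.range (i - k + 1), (-2:ℝ) ^ t * ((i - k).choose t : ℝ) := by
        rw [Finset.mul_sum]; apply Finset.sum_congr rfl; intro t _; ring
    _ = (-1 : ℝ) ^ (i - k) * (i.choose k : ℝ) := by rw [← this]; ring


lemma row_aux (a : ℕ → ℕ → ℝ) (hrec : ∀ i j, a (i + 1) j - a i (j + 1) = 2 * a i j) :
    ∀ i j, ∑ m ∈ Finset.range (i + 1), (i.choose m : ℝ) * (-2 : ℝ) ^ (i - m) * a m j
      = a 0 (i + j) := by
  intro i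
  induction i with
  | zero => intro j; simp
  | succ i ih =>
    intro j
    have hstep : ∀ m, a m (j + 1) = a (m + 1) j - 2 * a m j := fun m => by linarith [hrec m j]
    have h2 : a 0 (i + 1 + j) = ∑ m ∈ Finset.range (i + 1),
        (i.choose m : ℝ) * (-2 : ℝ) ^ (i - m) * a m (j + 1) := by
      rw [ih (j + 1)]; congr 1; omega
    rw [h2]
    simp only [hstep]
    set A := ∑ k ∈ Finset.range (i + 1), (i.choose k : ℝ) * (-2 : ℝ) ^ (i - k) * a (k + 1) j with hA
    set B := ∑ k ∈ Finset.range (i + 1), (i.choose k : ℝ) * (-2 : ℝ) ^ (i - k) * a k j with hB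
    have hRHS : ∑ m ∈ Finset.range (i + 1),
        (i.choose m : ℝ) * (-2 : ℝ) ^ (i - m) * (a (m + 1) j - 2 * a m j) = A - 2 * B := by
      rw [hA, hB, Finset.mul_sum, ← Finset.sum_sub_distrib]
      apply Finset.sum_congr rfl; intro k _; ring
    rw [hRHS]
    have hLHS : ∑ m ∈ Finset.range (i + 1 + 1),
        ((i + 1).choose m : ℝ) * (-2 : ℝ) ^ (i + 1 - m) * a m j
        = (∑ k ∈ Finset.range (i + 1), ((i + 1).choose (k + 1) : ℝ) * (-2 : ℝ) ^ (i - k) * a (k + 1) j)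
          + (-2 : ℝ) ^ (i + 1) * a 0 j := by
      rw [Finset.sum_range_succ' _ (i + 1)]
      congr 1
      · apply Finset.sum_congr rfl; intro k _
        have : i + 1 - (k + 1) = i - k := by omega
        rw [this]
      · simp
    rw [hLHS]
    set C := ∑ k ∈ Finset.range (i + 1), (i.choose (k + 1) : ℝ) * (-2 : ℝ) ^ (i - k) * a (k + 1) j
      with hCdef
    have hPascal : ∑ k ∈ Finset.range (i + 1),
        ((i + 1).choose (k + 1) : ℝ) * (-2 : ℝ) ^ (i - k) * a (k + 1) j = A + C := by
      rw [hA, hCdef, ← Finset.sum_add_distrib]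
      apply Finset.sum_congr rfl; intro k _
      rw [Nat.choose_succ_succ']
      push_cast
      ring
    have hC : C = -2 * B - (-2 : ℝ) ^ (i + 1) * a 0 j := by
      have hBsplit : B = (∑ k ∈ Finset.range i,
          (i.choose (k + 1) : ℝ) * (-2 : ℝ) ^ (i - (k + 1)) * a (k + 1) j)
          + (-2 : ℝ) ^ i * a 0 j := by
        rw [hB, Finset.sum_range_succ' _ i]; simp
      have hC2 : C = ∑ k ∈ Finset.range i,
          (i.choose (k + 1) : ℝ) * (-2 : ℝ) ^ (i - k) * a (k + 1) j := by
        rw [hCdef, Finset.sum_range_succ]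
        simp [Nat.choose_succ_self]
      rw [hC2, hBsplit]
      rw [mul_add, Finset.mul_sum]
      have : ∀ k ∈ Finset.range i,
          -2 * ((i.choose (k + 1) : ℝ) * (-2 : ℝ) ^ (i - (k + 1)) * a (k + 1) j)
          = (i.choose (k + 1) : ℝ) * (-2 : ℝ) ^ (i - k) * a (k + 1) j := by
        intro k hk
        simp only [Finset.mem_range] at hk
        have : i - k = (i - (k + 1)) + 1 := by omega
        rw [this, pow_succ]
        ring
      rw [Finset.sum_congr rfl this]
      ring_nf
    rw [hPascal, hC]
    ring

/-- If `a (i+1) j - a i (j+1) = 2 a i j` and `a j i = (-1)^{i+j} a i j`, then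
`B(x) = e^{-x} A(x)` is an even power series, where `A` is the EGF of the first
row; i.e. the odd-degree coefficients
`∑_{m=0}^{i} C(i,m) (-1)^{i-m} a m 0` (for `i` odd) vanish. -/
theorem seidel_even_series (a : ℕ → ℕ → ℝ)
    (hrec : ∀ i j, a (i + 1) j - a i (j + 1) = 2 * a i j)
    (hsym : ∀ i j, a j i = (-1 : ℝ) ^ (i + j) * a i j) :
    ∀ i, Odd i →
      ∑ m ∈ Finset.range (i + 1), (i.choose m : ℝ) * (-1 : ℝ) ^ (i - m) * a m 0 = 0 := by
  intro i hi
  set b := ∑ m ∈ Finset.range (i + 1), (i.choose m : ℝ) * (-1 : ℝ) ^ (i - m) * a m 0 with hb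
  have hrep : ∀ n, a n 0 = (-1 : ℝ) ^ n *
      ∑ k ∈ Finset.range (n + 1), (n.choose k : ℝ) * (-2 : ℝ) ^ (n - k) * a k 0 := by
    intro n
    have h1 : a 0 n = (-1 : ℝ) ^ n * a n 0 := by simpa using hsym n 0
    have h2 : ∑ m ∈ Finset.range (n + 1), (n.choose m : ℝ) * (-2 : ℝ) ^ (n - m) * a m 0
        = a 0 n := by simpa using row_aux a hrec n 0
    rw [← h2] at h1
    have hsq : ((-1 : ℝ) ^ n) * ((-1 : ℝ) ^ n) = 1 := by
      rcases Nat.even_or_odd n with h | h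
      · rw [h.neg_one_pow]; norm_num
      · rw [h.neg_one_pow]; norm_num
    calc a n 0 = ((-1 : ℝ) ^ n * (-1 : ℝ) ^ n) * a n 0 := by rw [hsq, one_mul]
      _ = (-1 : ℝ) ^ n * ((-1 : ℝ) ^ n * a n 0) := by ring
      _ = (-1 : ℝ) ^ n * ∑ k ∈ Finset.range (n + 1),
            (n.choose k : ℝ) * (-2 : ℝ) ^ (n - k) * a k 0 := by rw [← h1]
  have step1 : b = ∑ m ∈ Finset.range (i + 1), ∑ k ∈ Finset.range (i + 1),
      (i.choose m : ℝ) * (m.choose k : ℝ) * (-1 : ℝ) ^ (i - m) * (-1 : ℝ) ^ m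
        * (-2 : ℝ) ^ (m - k) * a k 0 := by
    rw [hb]
    apply Finset.sum_congr rfl
    intro m hm
    simp only [Finset.mem_range] at hm
    rw [hrep m]
    have hext : ∑ k ∈ Finset.range (m + 1), (m.choose k : ℝ) * (-2 : ℝ) ^ (m - k) * a k 0
        = ∑ k ∈ Finset.range (i + 1), (m.choose k : ℝ) * (-2 : ℝ) ^ (m - k) * a k 0 := by
      apply Finset.sum_subset
      · intro x hx; simp only [Finset.mem_range] at *; omega
      · intro x hx hnx
        simp only [Finset.mem_range] at hx hnx
        rw [Nat.choose_eq_zero_of_lt (by omega)]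
        simp
    rw [hext, Finset.mul_sum, Finset.mul_sum]
    apply Finset.sum_congr rfl
    intro k _
    ring
  have step2 : ∀ k ∈ Finset.range (i + 1), ∑ m ∈ Finset.range (i + 1),
      (i.choose m : ℝ) * (m.choose k : ℝ) * (-1 : ℝ) ^ (i - m) * (-1 : ℝ) ^ m
        * (-2 : ℝ) ^ (m - k) * a k 0
      = (-1 : ℝ) ^ i * ((-1 : ℝ) ^ (i - k) * (i.choose k : ℝ)) * a k 0 := by
    intro k hk
    simp only [Finset.mem_range] at hk
    have hconst : ∀ m ∈ Finset.range (i + 1),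
        (i.choose m : ℝ) * (m.choose k : ℝ) * (-1 : ℝ) ^ (i - m) * (-1 : ℝ) ^ m
          * (-2 : ℝ) ^ (m - k) * a k 0
        = (-1 : ℝ) ^ i * ((i.choose m : ℝ) * (m.choose k : ℝ) * (-2 : ℝ) ^ (m - k)) * a k 0 := by
      intro m hm
      simp only [Finset.mem_range] at hm
      have hpow : (-1 : ℝ) ^ (i - m) * (-1 : ℝ) ^ m = (-1 : ℝ) ^ i := by
        rw [← pow_add]; congr 1; omega
      linear_combination ((i.choose m : ℝ) * (m.choose k : ℝ) * (-2 : ℝ) ^ (m - k) * a k 0) * hpow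
    rw [Finset.sum_congr rfl hconst]
    rw [← Finset.sum_mul, ← Finset.mul_sum]
    rw [coeff_aux i k (by omega)]
  have hodd : (-1 : ℝ) ^ i = -1 := Odd.neg_one_pow hi
  have key : b = -b := by
    calc b = _ := step1
      _ = ∑ k ∈ Finset.range (i + 1), ∑ m ∈ Finset.range (i + 1),
          (i.choose m : ℝ) * (m.choose k : ℝ) * (-1 : ℝ) ^ (i - m) * (-1 : ℝ) ^ m
            * (-2 : ℝ) ^ (m - k) * a k 0 := Finset.sum_comm
      _ = ∑ k ∈ Finset.range (i + 1),
          (-1 : ℝ) ^ i * ((-1 : ℝ) ^ (i - k) * (i.choose k : ℝ)) * a k 0 :=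
        Finset.sum_congr rfl step2
      _ = -b := by
        rw [hodd, hb, ← Finset.sum_neg_distrib]
        apply Finset.sum_congr rfl
        intro k _
        ring
  linarith
end

section
/- For a Seidel array (a_{i,j}) satisfying a_{i+1,j} - a_{i,j+1} = 2 a_{i,j}, the symmetry condition a_{j,i} = (-1)^{i+j} a_{i,j} for all i, j follows from the boundary condition a_{0,i} = (-1)^i a_{i,0} for all i. -/
/-- For a Seidel array with `a (i+1) j - a i (j+1) = 2 a i j`, the symmetry
`a j i = (-1)^{i+j} a i j` follows from the boundary condition
`a 0 i = (-1)^i a i 0`. -/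
theorem seidel_symmetry_of_boundary (a : ℕ → ℕ → ℝ)
    (hrec : ∀ i j, a (i + 1) j - a i (j + 1) = 2 * a i j)
    (hbd : ∀ i, a 0 i = (-1 : ℝ) ^ i * a i 0) :
    ∀ i j, a j i = (-1 : ℝ) ^ (i + j) * a i j := by
  set b : ℕ → ℕ → ℝ := fun i j => (-1 : ℝ) ^ (i + j) * a j i with hb
  have key : ∀ i j, b i j = a i j := by
    intro i
    induction i with
    | zero =>
      intro j
      simp only [hb, Nat.zero_add]
      exact (hbd j).symm
    | succ i ih =>
      intro j
      have h1 : b (i + 1) j = b i (j + 1) + 2 * b i j := by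
        simp only [hb]
        have hr : a j (i + 1) = a (j + 1) i - 2 * a j i := by
          have := hrec j i; linarith
        have e1 : (i + 1 + j) = (i + j) + 1 := by ring
        have e2 : (i + (j + 1)) = (i + j) + 1 := by ring
        rw [hr, e1, e2, pow_succ]
        ring
      have h2 := hrec i j
      rw [h1, ih, ih]
      linarith
  intro i j
  have h := key i j
  simp only [hb] at h
  have : ((-1 : ℝ) ^ (i + j)) * ((-1 : ℝ) ^ (i + j)) = 1 := by
    rw [← pow_add, ← two_mul, pow_mul]; norm_num
  calc a j i = ((-1 : ℝ) ^ (i+j) * (-1 : ℝ) ^ (i+j)) * a j i := by rw [this]; ring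
    _ = (-1 : ℝ) ^ (i+j) * ((-1:ℝ)^(i+j) * a j i) := by ring
    _ = (-1 : ℝ) ^ (i+j) * a i j := by rw [h]
end

section
/- With P(x) = sum_{n≥0} 2^n p_n(n) x^{2n}/(2n)! and Q(x) = sum_{n≥1} 2^{n-1}(p_n(n) - p_n(n-1)) x^{2n-1}/(2n-1)!, the identity P(x) = 1 + x Q(x) holds as formal power series. -/
open Finset

lemma sum_mul_p_eq_zero (n : ℕ) : ∑ j ∈ Icc (-(n : ℤ)) n, j * p n j = 0 := by
  have h : ∑ j ∈ Icc (-(n : ℤ)) n, j * p n j = ∑ j ∈ Icc (-(n : ℤ)) n, -(j * p n j) :=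
    sum_equiv (Equiv.neg ℤ) (by simp [neg_le, and_comm])
      (fun j _ => by simp [p_neg])
  rw [sum_neg_distrib] at h
  linarith

open PowerSeries

/-- `P(x) = ∑_{n≥0} 2^n p_n(n) x^{2n}/(2n)!`. -/
noncomputable def Pdiag : PowerSeries ℚ :=
  PowerSeries.mk fun m =>
    if m % 2 = 0 then ((2 ^ (m / 2) * p (m / 2) ((m / 2 : ℕ) : ℤ) : ℤ) : ℚ) / m.factorial
    else 0

/-- `Q(x) = ∑_{n≥1} 2^{n-1}(p_n(n) - p_n(n-1)) x^{2n-1}/(2n-1)!`. -/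
noncomputable def Qdiag : PowerSeries ℚ :=
  PowerSeries.mk fun m =>
    if m % 2 = 1 then
      ((2 ^ ((m - 1) / 2) *
          (p ((m + 1) / 2) (((m + 1) / 2 : ℕ) : ℤ)
            - p ((m + 1) / 2) ((((m + 1) / 2 : ℕ) : ℤ) - 1)) : ℤ) : ℚ) / m.factorial
    else 0

lemma coeff_Pdiag_two_mul (n : ℕ) :
    coeff (2 * n) Pdiag = 2 ^ n * (p n n : ℚ) / (2 * n).factorial := by
  simp [Pdiag]

lemma coeff_Pdiag_two_mul_add_one (n : ℕ) : coeff (2 * n + 1) Pdiag = 0 := by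
  simp [Pdiag, Nat.add_mod]

lemma coeff_Qdiag_two_mul (n : ℕ) : coeff (2 * n) Qdiag = 0 := by
  simp [Qdiag]

lemma coeff_Qdiag_two_mul_add_one (n : ℕ) :
    coeff (2 * n + 1) Qdiag =
      2 ^ n * ((p (n + 1) (n + 1) : ℚ) - p (n + 1) n) / (2 * n + 1).factorial := by
  rw [Qdiag, coeff_mk, if_pos (by omega), show (2 * n + 1 + 1) / 2 = n + 1 by omega,
    show (2 * n + 1 - 1) / 2 = n by omega]
  push_cast
  ring_nf

/-- `P(x) = 1 + x Q(x)` as formal power series. -/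
theorem Pdiag_eq_one_add : Pdiag = 1 + PowerSeries.X * Qdiag := by
  ext m
  obtain ⟨n, rfl | rfl⟩ := Nat.even_or_odd' m
  · cases n with
    | zero => simp [Pdiag, p]
    | succ n =>
      have hP := coeff_Pdiag_two_mul (n + 1)
      rw [show 2 * (n + 1) = 2 * n + 1 + 1 by ring, Nat.factorial_succ] at hP
      rw [show 2 * (n + 1) = 2 * n + 1 + 1 by ring, map_add, coeff_succ_X_mul, coeff_one,
        if_neg (by omega), zero_add, hP, coeff_Qdiag_two_mul_add_one]
      have hdiag := p_succ_of_le (n := n) (k := n + 1) (by omega)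
      have hbelow := p_succ_of_le (n := n) (k := n) le_rfl
      have hfac : ((2 * n + 1).factorial : ℚ) ≠ 0 := by positivity
      push_cast [hdiag, hbelow]
      field_simp
      ring
  · rw [map_add, coeff_succ_X_mul, coeff_one, if_neg (by omega), coeff_Pdiag_two_mul_add_one,
      coeff_Qdiag_two_mul, zero_add]
end

section
/- The number of 2×n whirlpool permutations equals 2n times the number of up-up-or-down-down permutations of {1, ..., 2n-1}; equivalently, the number of permutations a_1 ... a_{2n} of {1,...,2n} satisfying (a_{2i-1} < a_{2i} ⟺ a_{2i} < a_{2i+1}) for 1 ≤ i ≤ n-1 equals 2n times the number of permutations b_1 ... b_{2n-1} of {1,...,2n-1} satisfying the same condition for 1 ≤ i ≤ n-1. -/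
/-- `W n` is the number of up-up-or-down-down permutations `a_1 ⋯ a_{2n}` of
`{1, …, 2n}` (the `2 × n` whirlpool permutation count). -/
noncomputable def W (n : ℕ) : ℕ :=
  Nat.card {a : Fin (2 * n) → ℤ //
    Function.Injective a ∧ (∀ i, a i ∈ Finset.Icc (1 : ℤ) (2 * n : ℤ)) ∧ UUDD a}

/-- `Uodd n` is the number of up-up-or-down-down permutations `b_1 ⋯ b_{2n-1}`
of `{1, …, 2n-1}`. -/
noncomputable def Uodd (n : ℕ) : ℕ :=
  Nat.card {b : Fin (2 * n - 1) → ℤ //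
    Function.Injective b ∧ (∀ i, b i ∈ Finset.Icc (1 : ℤ) (2 * n - 1 : ℤ)) ∧ UUDD b}

namespace WUaux

/-- insertion map: strictly monotone embedding of `ℤ` into `ℤ \ {v}`. -/
def ins (v x : ℤ) : ℤ := if x < v then x else x + 1

/-- deletion map: inverse of `ins` on `ℤ \ {v}`. -/
def del (v y : ℤ) : ℤ := if y < v then y else y - 1

lemma del_ins (v x : ℤ) : del v (ins v x) = x := by
  simp only [ins, del]; split_ifs <;> omega

lemma ins_del (v y : ℤ) (h : y ≠ v) : ins v (del v y) = y := by
  simp only [ins, del]; split_ifs <;> omega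

lemma ins_ne (v x : ℤ) : ins v x ≠ v := by
  simp only [ins]; split_ifs <;> omega

lemma ins_lt (v x y : ℤ) : ins v x < ins v y ↔ x < y := by
  simp only [ins]; split_ifs <;> omega

lemma ins_inj (v x y : ℤ) (h : ins v x = ins v y) : x = y := by
  simp only [ins] at h; split_ifs at h <;> omega

lemma del_lt (v x y : ℤ) (hx : x ≠ v) (hy : y ≠ v) : del v x < del v y ↔ x < y := by
  simp only [del]; split_ifs <;> omega

variable (n : ℕ)

/-- Forward map: drop the last entry and compress values. -/
def fwd (hn : 1 ≤ n) (a : Fin (2 * n) → ℤ) : Fin (2 * n - 1) → ℤ :=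
  fun i => del (a ⟨2 * n - 1, by omega⟩)
    (a ⟨i.1, Nat.lt_of_lt_of_le i.isLt (by omega)⟩)

/-- Backward map: insert `v` at the end, shifting values. -/
def bwd (v : ℤ) (b : Fin (2 * n - 1) → ℤ) : Fin (2 * n) → ℤ :=
  fun i => if h : i.1 < 2 * n - 1 then ins v (b ⟨i.1, h⟩) else v

variable {n}

lemma a_ne_last (hn : 1 ≤ n) (a : Fin (2 * n) → ℤ) (ha : Function.Injective a)
    (i : Fin (2 * n)) (hi : i.1 < 2 * n - 1) : a i ≠ a ⟨2 * n - 1, by omega⟩ := by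
  intro h
  have := congrArg Fin.val (ha h)
  simp only at this
  omega

lemma bwd_fwd (hn : 1 ≤ n) (a : Fin (2 * n) → ℤ) (ha : Function.Injective a) :
    bwd n (a ⟨2 * n - 1, by omega⟩) (fwd n hn a) = a := by
  funext i
  simp only [bwd, fwd]
  by_cases h : i.1 < 2 * n - 1
  · rw [dif_pos h, ins_del _ _ (a_ne_last hn a ha _ h)]
  · rw [dif_neg h]
    congr 1
    exact Fin.ext (show 2 * n - 1 = i.1 by have := i.isLt; omega)

lemma bwd_last (hn : 1 ≤ n) (v : ℤ) (b : Fin (2 * n - 1) → ℤ) :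
    bwd n v b ⟨2 * n - 1, by omega⟩ = v := by
  simp only [bwd]
  rw [dif_neg (by omega)]

lemma fwd_bwd (hn : 1 ≤ n) (v : ℤ) (b : Fin (2 * n - 1) → ℤ) :
    fwd n hn (bwd n v b) = b := by
  funext i
  simp only [fwd, bwd]
  rw [dif_neg (by omega : ¬ (2 * n - 1 < 2 * n - 1)), dif_pos i.isLt, del_ins]

lemma fwd_prop (hn : 1 ≤ n) (a : Fin (2 * n) → ℤ) (ha_inj : Function.Injective a)
    (ha_mem : ∀ i, a i ∈ Finset.Icc (1 : ℤ) (2 * n : ℤ)) (ha_uudd : UUDD a) :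
    Function.Injective (fwd n hn a) ∧
      (∀ i, fwd n hn a i ∈ Finset.Icc (1 : ℤ) (2 * n - 1 : ℤ)) ∧ UUDD (fwd n hn a) := by
  set v := a ⟨2 * n - 1, by omega⟩ with hv
  have hne : ∀ (i : Fin (2 * n)), i.1 < 2 * n - 1 → a i ≠ v :=
    fun i hi => a_ne_last hn a ha_inj i hi
  refine ⟨?_, ?_, ?_⟩
  · intro i j hij
    simp only [fwd] at hij
    have h1 := congrArg (ins (a ⟨2 * n - 1, by omega⟩)) hij
    rw [ins_del _ _ (hne _ (by simpa using i.isLt)),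
      ins_del _ _ (hne _ (by simpa using j.isLt))] at h1
    have := congrArg Fin.val (ha_inj h1)
    exact Fin.ext (by simpa using this)
  · intro i
    simp only [fwd]
    have h1 := ha_mem ⟨i.1, by omega⟩
    have h2 := ha_mem ⟨2 * n - 1, by omega⟩
    have h3 := hne ⟨i.1, by omega⟩ (by simpa using i.isLt)
    rw [← hv] at h2
    simp only [Finset.mem_Icc] at h1 h2 ⊢
    simp only [del]; split_ifs <;> omega
  · intro t ht
    simp only [fwd]
    rw [del_lt _ _ _ (hne _ (by simp; omega)) (hne _ (by simp; omega)),
      del_lt _ _ _ (hne _ (by simp; omega)) (hne _ (by simp; omega))]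
    exact ha_uudd t (by omega)

lemma bwd_prop (hn : 1 ≤ n) (v : ℤ) (hv : v ∈ Finset.Icc (1 : ℤ) (2 * n : ℤ))
    (b : Fin (2 * n - 1) → ℤ) (hb_inj : Function.Injective b)
    (hb_mem : ∀ i, b i ∈ Finset.Icc (1 : ℤ) (2 * n - 1 : ℤ)) (hb_uudd : UUDD b) :
    Function.Injective (bwd n v b) ∧
      (∀ i, bwd n v b i ∈ Finset.Icc (1 : ℤ) (2 * n : ℤ)) ∧ UUDD (bwd n v b) := by
  refine ⟨?_, ?_, ?_⟩
  · intro i j hij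
    simp only [bwd] at hij
    by_cases hi : i.1 < 2 * n - 1 <;> by_cases hj : j.1 < 2 * n - 1
    · rw [dif_pos hi, dif_pos hj] at hij
      have := congrArg Fin.val (hb_inj (ins_inj v _ _ hij))
      exact Fin.ext (by simpa using this)
    · rw [dif_pos hi, dif_neg hj] at hij
      exact absurd hij (ins_ne v _)
    · rw [dif_neg hi, dif_pos hj] at hij
      exact absurd hij.symm (ins_ne v _)
    · exact Fin.ext (by omega)
  · intro i
    simp only [bwd]
    by_cases hi : i.1 < 2 * n - 1
    · rw [dif_pos hi]
      have h1 := hb_mem ⟨i.1, hi⟩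
      simp only [Finset.mem_Icc] at h1 hv ⊢
      simp only [ins]; split_ifs <;> omega
    · rw [dif_neg hi]; exact hv
  · intro t ht
    have h0 : 2 * t < 2 * n - 1 := by omega
    have h1 : 2 * t + 1 < 2 * n - 1 := by omega
    have h2 : 2 * t + 2 < 2 * n - 1 := by omega
    show (if h : 2 * t < 2 * n - 1 then ins v (b ⟨2 * t, h⟩) else v) <
        (if h : 2 * t + 1 < 2 * n - 1 then ins v (b ⟨2 * t + 1, h⟩) else v) ↔
        (if h : 2 * t + 1 < 2 * n - 1 then ins v (b ⟨2 * t + 1, h⟩) else v) <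
        (if h : 2 * t + 2 < 2 * n - 1 then ins v (b ⟨2 * t + 2, h⟩) else v)
    rw [dif_pos h0, dif_pos h1, dif_pos h2, ins_lt, ins_lt]
    exact hb_uudd t (by omega)

end WUaux

open WUaux in
/-- The number of `2 × n` whirlpool permutations equals `2n` times the number of
up-up-or-down-down permutations of `{1, …, 2n-1}`. -/
theorem W_eq_two_n_mul_U (n : ℕ) (hn : 1 ≤ n) : W n = 2 * n * Uodd n := by
  classical
  let e : {a : Fin (2 * n) → ℤ //
      Function.Injective a ∧ (∀ i, a i ∈ Finset.Icc (1 : ℤ) (2 * n : ℤ)) ∧ UUDD a} ≃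
      {v : ℤ // v ∈ Finset.Icc (1 : ℤ) (2 * n : ℤ)} ×
      {b : Fin (2 * n - 1) → ℤ //
        Function.Injective b ∧ (∀ i, b i ∈ Finset.Icc (1 : ℤ) (2 * n - 1 : ℤ)) ∧ UUDD b} :=
  { toFun := fun a =>
      (⟨a.1 ⟨2 * n - 1, by omega⟩, a.2.2.1 _⟩,
       ⟨fwd n hn a.1, fwd_prop hn a.1 a.2.1 a.2.2.1 a.2.2.2⟩)
    invFun := fun p =>
      ⟨bwd n p.1.1 p.2.1, bwd_prop hn p.1.1 p.1.2 p.2.1 p.2.2.1 p.2.2.2.1 p.2.2.2.2⟩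
    left_inv := fun a => Subtype.ext (bwd_fwd hn a.1 a.2.1)
    right_inv := fun p => Prod.ext
      (Subtype.ext (bwd_last hn p.1.1 p.2.1))
      (Subtype.ext (fwd_bwd hn p.1.1 p.2.1)) }
  rw [W, Uodd, Nat.card_congr e, Nat.card_prod]
  congr 1
  rw [Nat.card_eq_fintype_card, Fintype.card_coe, Int.card_Icc]
  omega
end
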